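/- Let G be a totally ordered abelian group, B = ⊕_{i∈G} Bᵢ a G-graded integral domain of characteristic zero, and deg : B → G ∪ {−∞} the degree function determined by the grading. Assume that B is finitely generated as a B₀-algebra, and let A be a subring of B₀ such that the transcendence degree of B₀ over A is finite. Then deg is tame over A. More precisely, given any z₁, …, z_m ∈ B₀ and homogeneous x₁, …, x_n ∈ B such that B₀ is algebraic over A[z₁, …, z_m] and B = B₀[x₁, …, x_n], for every A-derivation D : B → B, deg(D) is defined and deg(D) = max{δ_D(z₁), …, δ_D(z_m), δ_D(x₁), …, δ_D(x_n)}. -/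

import Mathlib

section DegreePrelude

variable {B : Type*} [CommRing B] {G : Type*} [AddCommGroup G] [LinearOrder G] [IsOrderedAddMonoid G]

/-- A degree function on `B` with values in `G ∪ {-∞}` -/
def IsDegreeFunction (deg : B → WithBot G) : Prop :=
  (∀ x : B, deg x = ⊥ ↔ x = 0) ∧
  (∀ x y : B, deg (x * y) = deg x + deg y) ∧
  (∀ x y : B, deg (x + y) ≤ max (deg x) (deg y))

/-- `degDelta deg D x = deg (D x) - deg x` (with value `-∞` if `D x = 0`). -/
noncomputable def degDelta (deg : B → WithBot G) (D : B → B) (x : B) : WithBot G :=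
  (deg (D x)).map fun a => a - (deg x).unbotD 0

/-- The set `{deg (D x) - deg x : x ∈ B \ {0}}`. -/
def degDeltaSet (deg : B → WithBot G) (D : B → B) : Set (WithBot G) :=
  {m | ∃ x : B, x ≠ 0 ∧ degDelta deg D x = m}

/-- `deg (D)` is defined, i.e. the set `{deg (D x) - deg x : x ≠ 0}` has a
greatest element in `G ∪ {-∞}`. -/
def DegreeDefinedAt (deg : B → WithBot G) (D : B → B) : Prop :=
  ∃ M, IsGreatest (degDeltaSet deg D) M

end DegreePrelude

open Polynomial DirectSum

/-!
Let `M` be the largest `δ_D` on the generators; we show `deg (D b) ≤ M + deg b` for all `b`.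
On the subring generated by `A` and the `zⱼ`, whose elements have degree `≤ 0`, this is the
Leibniz rule. In characteristic zero every `c ∈ B₀` is a simple root of some `q` over that subring;
differentiating `q(c) = 0` gives `q'(c) · D c = -∑ cⁱ · D qᵢ` with `q'(c) ∈ B₀ \ {0}` of degree `0`.
Finally the homogeneous `s ∈ B_g` with `deg (D s) ≤ M + g` form a monoid containing `B₀` and the
`xᵢ`, so they span `B` additively, and the bound passes to sums componentwise.
-/

namespace IsDegreeFunction

section Basic

variable {B G : Type*} [CommRing B] [AddCommGroup G] [LinearOrder G] {deg : B → WithBot G}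

theorem deg_zero (hd : IsDegreeFunction deg) : deg 0 = ⊥ :=
  (hd.1 0).2 rfl

theorem exists_eq_coe (hd : IsDegreeFunction deg) {x : B} (hx : x ≠ 0) : ∃ g : G, deg x = g :=
  (WithBot.ne_bot_iff_exists.1 fun h => hx ((hd.1 x).1 h)).imp fun _ h => h.symm

theorem deg_mul (hd : IsDegreeFunction deg) (x y : B) : deg (x * y) = deg x + deg y :=
  hd.2.1 x y

theorem deg_add_le (hd : IsDegreeFunction deg) (x y : B) : deg (x + y) ≤ max (deg x) (deg y) :=
  hd.2.2 x y

theorem deg_sum_le (hd : IsDegreeFunction deg) {ι : Type*} (s : Finset ι) (f : ι → B)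
    {M : WithBot G} (h : ∀ i ∈ s, deg (f i) ≤ M) : deg (∑ i ∈ s, f i) ≤ M := by
  induction s using Finset.cons_induction with
  | empty => simp [hd.deg_zero]
  | cons a s _ ih =>
    rw [Finset.sum_cons]
    exact (hd.deg_add_le _ _).trans <| max_le (h a (Finset.mem_cons_self a s))
      (ih fun i hi => h i (Finset.mem_cons_of_mem hi))

theorem deg_one (hd : IsDegreeFunction deg) [Nontrivial B] : deg 1 = 0 := by
  obtain ⟨g, hg⟩ := hd.exists_eq_coe one_ne_zero
  have h := hd.deg_mul 1 1
  rw [mul_one, hg, ← WithBot.coe_add, WithBot.coe_inj] at h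
  rw [hg, left_eq_add.1 h, WithBot.coe_zero]

theorem sup_degDelta_mem (hd : IsDegreeFunction deg) [Nontrivial B] {R : Type*} [CommSemiring R]
    [Algebra R B] (D : Derivation R B B) (F : Finset B) :
    F.sup (degDelta deg D) ∈ degDeltaSet deg D := by
  rcases eq_or_ne (F.sup (degDelta deg D)) ⊥ with hbot | hbot
  · exact ⟨1, one_ne_zero, by simp [hbot, degDelta, hd.deg_zero]⟩
  obtain ⟨b, -, hb⟩ := F.exists_mem_eq_sup
    (Finset.nonempty_iff_ne_empty.2 (by rintro rfl; simp at hbot)) (degDelta deg D)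
  refine ⟨b, ?_, hb.symm⟩
  rintro rfl
  simp [hb, degDelta, hd.deg_zero] at hbot

end Basic

variable {B G : Type*} [CommRing B] [AddCommGroup G] [LinearOrder G] [IsOrderedAddMonoid G]
  {deg : B → WithBot G}

theorem deg_neg_one (hd : IsDegreeFunction deg) [Nontrivial B] : deg (-1) = 0 := by
  obtain ⟨g, hg⟩ := hd.exists_eq_coe (neg_ne_zero.2 (one_ne_zero (α := B)))
  have h := hd.deg_mul (-1) (-1)
  rw [neg_one_mul, neg_neg, hd.deg_one, hg, ← WithBot.coe_add, ← WithBot.coe_zero,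
    WithBot.coe_inj, eq_comm, ← two_nsmul, two_nsmul_eq_zero] at h
  rw [hg, h, WithBot.coe_zero]

theorem deg_neg (hd : IsDegreeFunction deg) [Nontrivial B] (x : B) : deg (-x) = deg x := by
  rw [← neg_one_mul, hd.deg_mul, hd.deg_neg_one, zero_add]

theorem deg_mul_le_of_nonpos_left (hd : IsDegreeFunction deg) {x y : B} {M : WithBot G}
    (hx : deg x ≤ 0) (hy : deg y ≤ M) : deg (x * y) ≤ M :=
  hd.deg_mul x y ▸ add_le_of_nonpos_of_le hx hy

theorem degDelta_le_iff (hd : IsDegreeFunction deg) {R : Type*} [CommSemiring R] [Algebra R B]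
    (D : Derivation R B B) (x : B) (m : WithBot G) :
    degDelta deg D x ≤ m ↔ deg (D x) ≤ m + deg x := by
  rcases eq_or_ne x 0 with rfl | hx
  · simp [degDelta, hd.deg_zero]
  obtain ⟨g, hg⟩ := hd.exists_eq_coe hx
  rw [degDelta, hg, WithBot.unbotD_coe]
  induction deg (D x) using WithBot.recBotCoe with
  | bot => simp
  | coe a =>
    induction m using WithBot.recBotCoe with
    | bot => simp
    | coe m => simp only [WithBot.map_coe, ← WithBot.coe_add, WithBot.coe_le_coe, sub_le_iff_le_add]

end IsDegreeFunction

namespace Derivation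

variable {B : Type*} [CommRing B]

def ofAddLeibniz (D : B → B) (hadd : ∀ u v, D (u + v) = D u + D v)
    (hmul : ∀ u v, D (u * v) = u * D v + v * D u) : Derivation ℤ B B :=
  mk' (AddMonoidHom.mk' D hadd).toIntLinearMap hmul

theorem map_eval {R : Type*} [CommSemiring R] [Algebra R B] (D : Derivation R B B) (p : B[X])
    (c : B) : D (p.eval c) = (derivative p).eval c * D c + p.sum fun i a => c ^ i * D a := by
  induction p using Polynomial.induction_on' with
  | add p q hp hq =>
    rw [eval_add, map_add, hp, hq, derivative_add, eval_add,
      sum_add_index p q _ (fun i => by simp) (fun _ _ _ => by rw [map_add, mul_add])]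
    ring
  | monomial n a =>
    rw [eval_monomial, leibniz, leibniz_pow, derivative_monomial, eval_monomial,
      sum_monomial_index a _ (by simp)]
    simp only [smul_eq_mul, nsmul_eq_mul]
    ring

end Derivation

namespace Polynomial

variable {B : Type*} [CommRing B]

theorem coeff_derivative_mem (R : Subring B) {p : B[X]} (hp : ∀ i, p.coeff i ∈ R) (i : ℕ) :
    (derivative p).coeff i ∈ R := by
  rw [coeff_derivative]
  exact R.mul_mem (hp _) (add_mem (natCast_mem R i) (one_mem R))

theorem eval_mem_of_coeff_mem (R : Subring B) {p : B[X]} (hp : ∀ i, p.coeff i ∈ R) {c : B}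
    (hc : c ∈ R) : p.eval c ∈ R := by
  rw [eval_eq_sum_range]
  exact sum_mem fun i _ => R.mul_mem (hp i) (pow_mem hc i)

theorem exists_eval_derivative_ne_zero [IsDomain B] [CharZero B] (R : Subring B) {p : B[X]}
    (hp0 : p ≠ 0) (hpR : ∀ i, p.coeff i ∈ R) {c : B} (hpc : p.eval c = 0) :
    ∃ q : B[X], (∀ i, q.coeff i ∈ R) ∧ q.eval c = 0 ∧ (derivative q).eval c ≠ 0 := by
  induction hn : p.natDegree using Nat.strong_induction_on generalizing p with
  | _ n ih =>
    by_cases hp' : (derivative p).eval c = 0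
    · have hdeg : p.natDegree ≠ 0 := by
        intro h
        rw [eq_C_of_natDegree_eq_zero h, eval_C] at hpc
        exact hp0 (by rw [eq_C_of_natDegree_eq_zero h, hpc, C_0])
      exact ih _ (hn ▸ natDegree_derivative_lt hdeg) (derivative_ne_zero.2 hdeg)
        (coeff_derivative_mem R hpR) hp' rfl
    · exact ⟨p, hpR, hpc, hp'⟩

end Polynomial

section Graded

variable {B G : Type*} [CommRing B] [AddCommGroup G] [DecidableEq G]
  {𝒜 : G → AddSubgroup B} [GradedRing 𝒜]

theorem exists_finset_homogeneous_closure_eq_top {ι : Type*} [Fintype ι] (x : ι → B)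
    (hx : Subring.closure ((𝒜 0 : Set B) ∪ Set.range x) = ⊤) :
    ∃ X : Finset B, (∀ s ∈ X, ∃ d, s ∈ 𝒜 d) ∧ Subring.closure ((𝒜 0 : Set B) ∪ X) = ⊤ := by
  classical
  refine ⟨Finset.univ.biUnion fun i => (decompose 𝒜 (x i)).support.image fun d =>
    (decompose 𝒜 (x i) d : B), ?_, eq_top_iff.2 (hx.symm.le.trans (Subring.closure_le.2 ?_))⟩
  · simp only [Finset.mem_biUnion, Finset.mem_image]
    rintro _ ⟨i, -, d, -, rfl⟩
    exact ⟨d, SetLike.coe_mem _⟩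
  · rintro y (hy | ⟨i, rfl⟩)
    · exact Subring.subset_closure (Or.inl hy)
    · rw [← sum_support_decompose 𝒜 (x i)]
      refine sum_mem fun d hd => Subring.subset_closure (Or.inr ?_)
      simp only [Finset.coe_biUnion, Finset.coe_image, Set.mem_iUnion, Set.mem_image]
      exact ⟨i, Finset.mem_coe.2 (Finset.mem_univ i), d, hd, rfl⟩

variable [LinearOrder G]

variable (𝒜) in
/-- `deg` is the degree function determined by the grading `𝒜`. -/
def IsGradingDegree (deg : B → WithBot G) : Prop :=
  ∀ x : B, x ≠ 0 → ∀ i : G, (deg x ≤ ↑i ↔ ∀ j : G, i < j → (decompose 𝒜 x j : B) = 0)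

namespace IsGradingDegree

variable {deg : B → WithBot G}

theorem deg_le_of_mem (hg : IsGradingDegree 𝒜 deg) (hd : IsDegreeFunction deg) {i : G} {x : B}
    (hx : x ∈ 𝒜 i) : deg x ≤ i := by
  rcases eq_or_ne x 0 with rfl | h0
  · simp [hd.deg_zero]
  exact (hg x h0 i).2 fun _ hj => decompose_of_mem_ne 𝒜 hx hj.ne

theorem le_deg_of_decompose_ne_zero (hg : IsGradingDegree 𝒜 deg) (hd : IsDegreeFunction deg)
    {x : B} {d : G} (h : (decompose 𝒜 x d : B) ≠ 0) : (d : WithBot G) ≤ deg x := by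
  have hx : x ≠ 0 := by rintro rfl; simp at h
  obtain ⟨g, hg'⟩ := hd.exists_eq_coe hx
  rw [hg', WithBot.coe_le_coe]
  exact not_lt.1 fun hlt => h ((hg x hx g).1 hg'.le d hlt)

theorem deg_eq_of_mem (hg : IsGradingDegree 𝒜 deg) (hd : IsDegreeFunction deg) {i : G} {x : B}
    (hx : x ∈ 𝒜 i) (h0 : x ≠ 0) : deg x = i :=
  (hg.deg_le_of_mem hd hx).antisymm
    (hg.le_deg_of_decompose_ne_zero hd (by rwa [decompose_of_mem_same 𝒜 hx]))

end IsGradingDegree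

end Graded

section DerivationBound

variable {B G R : Type*} [CommRing B] [AddCommGroup G] [LinearOrder G] [IsOrderedAddMonoid G]
  [CommSemiring R] [Algebra R B] {deg : B → WithBot G}

namespace IsDegreeFunction

theorem deg_nonpos_and_deg_derivation_le_of_mem_closure (hd : IsDegreeFunction deg) [Nontrivial B]
    (D : Derivation R B B) {M : WithBot G} {s : Set B} (hs : ∀ x ∈ s, deg x ≤ 0 ∧ deg (D x) ≤ M)
    {r : B} (hr : r ∈ Subring.closure s) : deg r ≤ 0 ∧ deg (D r) ≤ M := by
  induction hr using Subring.closure_induction with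
  | mem x hx => exact hs x hx
  | zero => simp [hd.deg_zero]
  | one => simp [hd.deg_one, hd.deg_zero]
  | add x y _ _ hx hy =>
    rw [map_add]
    exact ⟨(hd.deg_add_le x y).trans (max_le hx.1 hy.1),
      (hd.deg_add_le _ _).trans (max_le hx.2 hy.2)⟩
  | neg x _ hx => rwa [map_neg, hd.deg_neg, hd.deg_neg]
  | mul x y _ _ hx hy =>
    rw [D.leibniz, smul_eq_mul, smul_eq_mul, hd.deg_mul]
    exact ⟨add_nonpos hx.1 hy.1, (hd.deg_add_le _ _).trans
      (max_le (hd.deg_mul_le_of_nonpos_left hx.1 hy.2) (hd.deg_mul_le_of_nonpos_left hy.1 hx.2))⟩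

theorem deg_derivation_le_of_eval_eq_zero (hd : IsDegreeFunction deg) [IsDomain B] [CharZero B]
    (D : Derivation R B B) {M : WithBot G} {R₀ S : Subring B} (hR₀S : R₀ ≤ S)
    (hS : ∀ x ∈ S, x ≠ 0 → deg x = 0) (hR₀ : ∀ r ∈ R₀, deg (D r) ≤ M) {c : B} (hc : c ∈ S)
    {p : B[X]} (hp0 : p ≠ 0) (hpR₀ : ∀ i, p.coeff i ∈ R₀) (hpc : p.eval c = 0) : deg (D c) ≤ M := by
  obtain ⟨q, hqR₀, hqc, hq'c⟩ := exists_eval_derivative_ne_zero R₀ hp0 hpR₀ hpc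
  have hS_nonpos : ∀ x ∈ S, deg x ≤ 0 := fun x hx => by
    rcases eq_or_ne x 0 with rfl | h0
    · simp [hd.deg_zero]
    · exact (hS x hx h0).le
  have hq' : deg ((derivative q).eval c) = 0 :=
    hS _ (eval_mem_of_coeff_mem S (fun i => hR₀S (coeff_derivative_mem R₀ hqR₀ i)) hc) hq'c
  have hDq : (derivative q).eval c * D c = -(q.sum fun i a => c ^ i * D a) :=
    eq_neg_of_add_eq_zero_left (by rw [← D.map_eval, hqc, map_zero])
  calc deg (D c) = deg ((derivative q).eval c * D c) := by rw [hd.deg_mul, hq', zero_add]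
    _ = deg (q.sum fun i a => c ^ i * D a) := by rw [hDq, hd.deg_neg]
    _ ≤ M := hd.deg_sum_le _ _ fun i _ =>
      hd.deg_mul_le_of_nonpos_left (hS_nonpos _ (pow_mem hc i)) (hR₀ _ (hqR₀ i))

end IsDegreeFunction

variable [DecidableEq G] {𝒜 : G → AddSubgroup B} [GradedRing 𝒜]

-- `deg (D b) ≤ M + deg b` is not preserved by sums (`deg` drops under cancellation), but its
-- componentwise form is.
variable (𝒜) in
def IsDegreeFunction.derivBoundedComponents (hd : IsDegreeFunction deg) [Nontrivial B]
    (D : Derivation R B B) (M : WithBot G) : AddSubgroup B where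
  carrier := {b | ∀ d : G, deg (D (decompose 𝒜 b d)) ≤ M + d}
  zero_mem' := by simp [hd.deg_zero]
  add_mem' := fun {a b} ha hb d => by
    rw [decompose_add, DirectSum.add_apply, AddSubgroup.coe_add, map_add]
    exact (hd.deg_add_le _ _).trans (max_le (ha d) (hb d))
  neg_mem' := fun {a} ha d => by
    rw [decompose_neg, DFinsupp.neg_apply, AddSubgroup.coe_neg, map_neg, hd.deg_neg]
    exact ha d

namespace IsGradingDegree

def derivBoundedHomogeneous (hg : IsGradingDegree 𝒜 deg)
    (hd : IsDegreeFunction deg) (D : Derivation R B B) (M : WithBot G) : Submonoid B where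
  carrier := {s | ∃ g : G, s ∈ 𝒜 g ∧ deg (D s) ≤ M + g}
  one_mem' := ⟨0, SetLike.one_mem_graded 𝒜, by simp [hd.deg_zero]⟩
  mul_mem' := by
    rintro s t ⟨g, hs, hDs⟩ ⟨g', ht, hDt⟩
    have hmul_le : ∀ {g g' : G} {s t : B}, s ∈ 𝒜 g → deg (D t) ≤ M + g' →
        deg (s * D t) ≤ M + ↑(g + g') := fun {g g' s t} hs hDt =>
      calc deg (s * D t) ≤ g + (M + g') := hd.deg_mul s _ ▸ add_le_add (hg.deg_le_of_mem hd hs) hDt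
        _ = M + ↑(g + g') := by rw [WithBot.coe_add]; abel
    refine ⟨g + g', SetLike.mul_mem_graded hs ht, ?_⟩
    rw [D.leibniz, smul_eq_mul, smul_eq_mul]
    exact (hd.deg_add_le _ _).trans (max_le (hmul_le hs hDt) (add_comm g g' ▸ hmul_le ht hDs))

theorem derivBoundedHomogeneous_subset (hg : IsGradingDegree 𝒜 deg) (hd : IsDegreeFunction deg)
    [Nontrivial B] (D : Derivation R B B) (M : WithBot G) :
    (hg.derivBoundedHomogeneous hd D M : Set B) ⊆ hd.derivBoundedComponents 𝒜 D M := by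
  rintro s ⟨g, hs, hDs⟩ d
  rcases eq_or_ne g d with rfl | hgd
  · rwa [decompose_of_mem_same 𝒜 hs]
  · simp [decompose_of_mem_ne 𝒜 hs hgd, hd.deg_zero]

theorem deg_derivation_le_of_mem_derivBoundedComponents (hg : IsGradingDegree 𝒜 deg)
    (hd : IsDegreeFunction deg) [Nontrivial B] {D : Derivation R B B} {M : WithBot G} {b : B}
    (hb : b ∈ hd.derivBoundedComponents 𝒜 D M) : deg (D b) ≤ M + deg b := by
  classical
  rw [← sum_support_decompose 𝒜 b, map_sum, sum_support_decompose 𝒜 b]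
  refine hd.deg_sum_le _ _ fun d hd' => (hb d).trans (add_le_add_right ?_ M)
  exact hg.le_deg_of_decompose_ne_zero hd (by simpa using hd')

theorem deg_derivation_le_of_closure_eq_top (hg : IsGradingDegree 𝒜 deg)
    (hd : IsDegreeFunction deg) [Nontrivial B] {D : Derivation R B B} {M : WithBot G}
    (h : Subring.closure (hg.derivBoundedHomogeneous hd D M : Set B) = ⊤) (b : B) :
    deg (D b) ≤ M + deg b := by
  have hb := Subring.mem_closure_iff.1 (h ▸ Subring.mem_top b)
  rw [Submonoid.closure_eq] at hb
  exact hg.deg_derivation_le_of_mem_derivBoundedComponents hd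
    ((AddSubgroup.closure_le _).2 (hg.derivBoundedHomogeneous_subset hd D M) hb)

theorem degDelta_le_of_generators [IsDomain B] [CharZero B] (hg : IsGradingDegree 𝒜 deg)
    (hd : IsDegreeFunction deg)
    {A : Subring B} (hA : (A : Set B) ⊆ 𝒜 0) {Z X : Set B} (hZ : Z ⊆ 𝒜 0)
    (hX : ∀ x ∈ X, ∃ d, x ∈ 𝒜 d)
    (halg : ∀ b ∈ 𝒜 0, ∃ p : B[X], p ≠ 0 ∧
      (∀ i, p.coeff i ∈ Subring.closure ((A : Set B) ∪ Z)) ∧ p.eval b = 0)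
    (hgen : Subring.closure ((𝒜 0 : Set B) ∪ X) = ⊤) {D : Derivation R B B}
    (hDA : ∀ a ∈ A, D a = 0) {M : WithBot G} (hM : ∀ s ∈ Z ∪ X, degDelta deg D s ≤ M) (b : B) :
    degDelta deg D b ≤ M := by
  have hB₀ : ∀ x ∈ SetLike.GradeZero.subring 𝒜, x ≠ 0 → deg x = 0 := fun x hx h0 => by
    simpa using hg.deg_eq_of_mem hd hx h0
  have hR : ∀ r ∈ Subring.closure ((A : Set B) ∪ Z), deg r ≤ 0 ∧ deg (D r) ≤ M := by
    refine fun r hr => hd.deg_nonpos_and_deg_derivation_le_of_mem_closure D ?_ hr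
    rintro x (hx | hx)
    · exact ⟨by simpa using hg.deg_le_of_mem hd (hA hx), by simp [hDA x hx, hd.deg_zero]⟩
    · have hx0 : deg x ≤ 0 := by simpa using hg.deg_le_of_mem hd (hZ hx)
      exact ⟨hx0, ((hd.degDelta_le_iff D x M).1 (hM x (Or.inl hx))).trans
        (add_le_of_le_of_nonpos le_rfl hx0)⟩
  have hDB₀ : ∀ c ∈ 𝒜 0, deg (D c) ≤ M := fun c hc => by
    obtain ⟨p, hp0, hpR, hpc⟩ := halg c hc
    exact hd.deg_derivation_le_of_eval_eq_zero D (Subring.closure_le.2 (Set.union_subset hA hZ))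
      hB₀ (fun r hr => (hR r hr).2) hc hp0 hpR hpc
  refine (hd.degDelta_le_iff D b M).2 (hg.deg_derivation_le_of_closure_eq_top hd
    (eq_top_iff.2 (hgen.symm.le.trans (Subring.closure_mono ?_))) b)
  rintro x (hx | hx)
  · exact ⟨0, hx, by simpa using hDB₀ x hx⟩
  · obtain ⟨d, hxd⟩ := hX x hx
    exact ⟨d, hxd, ((hd.degDelta_le_iff D x M).1 (hM x (Or.inr hx))).trans
      (add_le_add_right (hg.deg_le_of_mem hd hxd) M)⟩

theorem isGreatest_degDeltaSet [IsDomain B] [CharZero B] [DecidableEq B]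
    (hg : IsGradingDegree 𝒜 deg) (hd : IsDegreeFunction deg) {A : Subring B}
    (hA : (A : Set B) ⊆ 𝒜 0) {Z X : Finset B} (hZ : (Z : Set B) ⊆ 𝒜 0)
    (hX : ∀ x ∈ X, ∃ d, x ∈ 𝒜 d)
    (halg : ∀ b ∈ 𝒜 0, ∃ p : B[X], p ≠ 0 ∧
      (∀ i, p.coeff i ∈ Subring.closure ((A : Set B) ∪ Z)) ∧ p.eval b = 0)
    (hgen : Subring.closure ((𝒜 0 : Set B) ∪ X) = ⊤) {D : Derivation R B B}
    (hDA : ∀ a ∈ A, D a = 0) : IsGreatest (degDeltaSet deg D) ((Z ∪ X).sup (degDelta deg D)) := by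
  refine ⟨hd.sup_degDelta_mem D _, ?_⟩
  rintro _ ⟨b, -, rfl⟩
  exact hg.degDelta_le_of_generators hd hA hZ hX halg hgen hDA
    (fun s hs => Finset.le_sup (Finset.mem_union.2 hs)) b

end IsGradingDegree

end DerivationBound

theorem stmt11 {B G : Type*} [CommRing B] [IsDomain B] [CharZero B]
    [AddCommGroup G] [LinearOrder G] [IsOrderedAddMonoid G] [DecidableEq G]
    (𝒜 : G → AddSubgroup B) [GradedRing 𝒜]
    -- deg is the degree function determined by the grading 𝒜
    (deg : B → WithBot G) (hdegfn : IsDegreeFunction deg)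
    (hdeg : ∀ x : B, x ≠ 0 → ∀ i : G,
      (deg x ≤ ↑i ↔ ∀ j : G, i < j → (DirectSum.decompose 𝒜 x j : B) = 0))
    -- A is a subring of B₀
    (A : Subring B) (hA : (A : Set B) ⊆ (𝒜 0 : Set B))
    -- trdeg of B₀ over A is finite, and B is finitely generated over B₀
    (htrdeg : ∃ (m : ℕ) (z : Fin m → B), (∀ j, z j ∈ 𝒜 0) ∧
      ∀ b ∈ 𝒜 0, ∃ p : Polynomial B, p ≠ 0 ∧
        (∀ i : ℕ, p.coeff i ∈ Subring.closure ((A : Set B) ∪ Set.range z)) ∧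
        Polynomial.eval b p = 0)
    (hfg : ∃ (n : ℕ) (x : Fin n → B),
      Subring.closure ((𝒜 0 : Set B) ∪ Set.range x) = ⊤) :
    -- deg is tame over A:
    (∀ D : B → B, (∀ u v : B, D (u + v) = D u + D v) →
      (∀ u v : B, D (u * v) = u * D v + v * D u) →
      (∀ a ∈ A, D a = 0) → DegreeDefinedAt deg D) ∧
    -- more precisely:
    (∀ (m n : ℕ) (z : Fin m → B) (x : Fin n → B),
      (∀ j, z j ∈ 𝒜 0) → (∀ i : Fin n, ∃ d : G, x i ∈ 𝒜 d) →
      (∀ b ∈ 𝒜 0, ∃ p : Polynomial B, p ≠ 0 ∧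
        (∀ i : ℕ, p.coeff i ∈ Subring.closure ((A : Set B) ∪ Set.range z)) ∧
        Polynomial.eval b p = 0) →
      Subring.closure ((𝒜 0 : Set B) ∪ Set.range x) = ⊤ →
      ∀ D : B → B, (∀ u v : B, D (u + v) = D u + D v) →
        (∀ u v : B, D (u * v) = u * D v + v * D u) →
        (∀ a ∈ A, D a = 0) →
        IsGreatest (degDeltaSet deg D)
          ((Finset.univ.sup fun j => degDelta deg D (z j)) ⊔
            (Finset.univ.sup fun i => degDelta deg D (x i)))) := by
  classical
  have hg : IsGradingDegree 𝒜 deg := hdeg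
  have hrange : ∀ {k : ℕ} (y : Fin k → B), (Finset.univ.image y : Set B) = Set.range y :=
    fun y => by simp
  refine ⟨fun D hadd hmul hDA => ?_, fun m n z x hz hx halg hgen D hadd hmul hDA => ?_⟩
  · obtain ⟨m, z, hz, halg⟩ := htrdeg
    obtain ⟨n, x, hgen⟩ := hfg
    obtain ⟨X, hX, hgenX⟩ := exists_finset_homogeneous_closure_eq_top x hgen
    exact ⟨_, hg.isGreatest_degDeltaSet hdegfn hA (hrange z ▸ Set.range_subset_iff.2 hz) hX
      (hrange z ▸ halg) hgenX (D := Derivation.ofAddLeibniz D hadd hmul) hDA⟩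
  · have h := hg.isGreatest_degDeltaSet hdegfn hA (Z := Finset.univ.image z)
      (X := Finset.univ.image x) (hrange z ▸ Set.range_subset_iff.2 hz) (by simpa using hx)
      (hrange z ▸ halg) (hrange x ▸ hgen) (D := Derivation.ofAddLeibniz D hadd hmul) hDA
    rwa [Finset.sup_union, Finset.sup_image, Finset.sup_image] at h
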